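/- arXiv:1111.4723 — 2 statements merged into one kernel-verified Lean document; each statement's English description precedes it below -/
import Mathlib

section
/- For all n ≥ 1 and k ≥ 0, the number of self-dual Fishburn matrices of reduced size n with first-row sum k and even dimension equals the number of matrices in SM(n) whose first row has sum k and whose center column has sum 0; that is, |EM(n,k)| = |SM(n,k,0)|. -/
open Finset

/-- Square matrices of nonnegative integers of dimension `m` (0-based indexing). -/
abbrev Mat (m : ℕ) := Matrix (Fin m) (Fin m) ℕ

/-- Upper-triangular: all entries strictly below the main diagonal vanish. -/
def UT {m : ℕ} (M : Mat m) : Prop := ∀ i j : Fin m, (j : ℕ) < (i : ℕ) → M i j = 0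

/-- The size of a matrix: the sum of all its entries. -/
def msize {m : ℕ} (M : Mat m) : ℕ := ∑ i : Fin m, ∑ j : Fin m, M i j

/-- Row `i` contains a nonzero entry. -/
def rowNonzero {m : ℕ} (M : Mat m) (i : Fin m) : Prop := ∃ j, M i j ≠ 0

/-- Column `j` contains a nonzero entry. -/
def colNonzero {m : ℕ} (M : Mat m) (j : Fin m) : Prop := ∃ i, M i j ≠ 0

/-- The dual matrix: transpose along the antidiagonal, `M̄_{i,j} = M_{m+1-j,m+1-i}`. -/
def dual {m : ℕ} (M : Mat m) : Mat m := fun i j => M j.rev i.rev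

/-- A matrix is self-dual if it equals its dual. -/
def SelfDual {m : ℕ} (M : Mat m) : Prop := M = dual M

/-- A Fishburn matrix: upper-triangular, every row and every column contains a
nonzero entry. -/
def IsFishburn {m : ℕ} (M : Mat m) : Prop :=
  UT M ∧ (∀ i, rowNonzero M i) ∧ (∀ j, colNonzero M j)

/-- The reduced size: sum of the entries in NW-cells and diagonal cells
(in 1-based terms, cells `(i,j)` with `i + j ≤ m + 1`). -/
def reducedSize {m : ℕ} (M : Mat m) : ℕ :=
  ∑ i : Fin m, ∑ j : Fin m, if (i : ℕ) + (j : ℕ) + 1 ≤ m then M i j else 0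

/-- The reduced matrix: all entries in SE-cells are replaced by zeros. -/
def reduced {m : ℕ} (M : Mat m) : Mat m :=
  fun i j => if (i : ℕ) + (j : ℕ) + 1 ≤ m then M i j else 0

/-- A super triangular matrix: upper-triangular and all SE-cells are zero. -/
def SuperTri {m : ℕ} (M : Mat m) : Prop :=
  UT M ∧ ∀ i j : Fin m, m < (i : ℕ) + (j : ℕ) + 1 → M i j = 0

/-- The sum of the first row. -/
def firstRowSum {m : ℕ} (M : Mat m) : ℕ :=
  ∑ i : Fin m, ∑ j : Fin m, if (i : ℕ) = 0 then M i j else 0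

/-- The sum of the last column. -/
def lastColSum {m : ℕ} (M : Mat m) : ℕ :=
  ∑ i : Fin m, ∑ j : Fin m, if (j : ℕ) + 1 = m then M i j else 0

/-- The sum of the diagonal cells (cells `(i,j)` with `i + j = m + 1`, 1-based). -/
def diagSum {m : ℕ} (M : Mat m) : ℕ :=
  ∑ i : Fin m, ∑ j : Fin m, if (i : ℕ) + (j : ℕ) + 1 = m then M i j else 0

/-- The sum of the center column (column `k+1` of a matrix of dimension `2k+1`). -/
def centerColSum {m : ℕ} (M : Mat m) : ℕ :=
  ∑ i : Fin m, ∑ j : Fin m, if 2 * (j : ℕ) + 1 = m then M i j else 0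

/-- Square matrices of arbitrary dimension. -/
abbrev SMat := Σ m : ℕ, Mat m

/-- `M(n)`: self-dual Fishburn matrices of reduced size `n`. -/
def Mset (n : ℕ) : Set SMat :=
  {A | IsFishburn A.2 ∧ SelfDual A.2 ∧ reducedSize A.2 = n}

/-- `M(n,k)`: matrices of `M(n)` whose first row has sum `k`. -/
def Mset₂ (n k : ℕ) : Set SMat := {A ∈ Mset n | firstRowSum A.2 = k}

/-- `M(n,k,p)`: matrices of `M(n,k)` whose diagonal cells have sum `p`. -/
def Mset₃ (n k p : ℕ) : Set SMat := {A ∈ Mset₂ n k | diagSum A.2 = p}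

/-- `EM(n,k)`: matrices of `M(n,k)` of even dimension. -/
def EMset (n k : ℕ) : Set SMat := {A ∈ Mset₂ n k | Even A.1}

/-- `OM(n,k)`: matrices of `M(n,k)` of odd dimension. -/
def OMset (n k : ℕ) : Set SMat := {A ∈ Mset₂ n k | Odd A.1}

/-- `RM(n)`: row-Fishburn matrices of size `n`. -/
def RMset (n : ℕ) : Set SMat :=
  {A | UT A.2 ∧ (∀ i, rowNonzero A.2 i) ∧ msize A.2 = n}

/-- `RM(n,k)`: row-Fishburn matrices of size `n` whose last column has sum `k`. -/
def RMset₂ (n k : ℕ) : Set SMat := {A ∈ RMset n | lastColSum A.2 = k}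

/-- `RM(n,k,p)`: matrices of `RM(n,k)` whose first row has sum `p`. -/
def RMset₃ (n k p : ℕ) : Set SMat := {A ∈ RMset₂ n k | firstRowSum A.2 = p}

/-- `SM(n)`: super triangular matrices of size `n` and dimension `2k+1` such that
(a) each of the first `k` columns contains a nonzero entry, and
(b) for `1 ≤ i ≤ k`, row `k+1-i` or column `k+1+i` contains a nonzero entry
(0-based: for `a < k`, row `a` or column `b` with `a + b = 2k` is nonzero). -/
def SMset (n : ℕ) : Set SMat :=
  {A | SuperTri A.2 ∧ msize A.2 = n ∧
    ∃ k : ℕ, A.1 = 2 * k + 1 ∧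
      (∀ j : Fin A.1, (j : ℕ) < k → colNonzero A.2 j) ∧
      (∀ a b : Fin A.1, (a : ℕ) < k → (a : ℕ) + (b : ℕ) = 2 * k →
        rowNonzero A.2 a ∨ colNonzero A.2 b)}

/-- `SM(n,k,p)`: matrices of `SM(n)` whose first row has sum `k` and whose center
column has sum `p`. -/
def SMset₃ (n k p : ℕ) : Set SMat :=
  {A ∈ SMset n | firstRowSum A.2 = k ∧ centerColSum A.2 = p}

/-- `B(n)`: upper-triangular matrices of size `n` in which every row except
possibly the first contains a nonzero entry. -/
def Bset (n : ℕ) : Set SMat :=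
  {A | UT A.2 ∧ (∀ i : Fin A.1, (i : ℕ) ≠ 0 → rowNonzero A.2 i) ∧ msize A.2 = n}

/-- `B(n,k,p)`: matrices of `B(n)` whose first row has sum `p` and whose last
column has sum `k`. -/
def Bset₃ (n k p : ℕ) : Set SMat :=
  {A ∈ Bset n | firstRowSum A.2 = p ∧ lastColSum A.2 = k}

namespace St11

/-- Extension of a matrix to a function on all of ℕ × ℕ (zero outside). -/
def ext {m : ℕ} (M : Mat m) (i j : ℕ) : ℕ :=
  if h : i < m ∧ j < m then M ⟨i, h.1⟩ ⟨j, h.2⟩ else 0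

lemma ext_eq {m : ℕ} (M : Mat m) (i j : Fin m) : ext M i j = M i j := by
  simp [ext, i.isLt, j.isLt]

lemma ext_lt {m : ℕ} (M : Mat m) {i j : ℕ} (hi : i < m) (hj : j < m) :
    ext M i j = M ⟨i, hi⟩ ⟨j, hj⟩ := by simp [ext, hi, hj]

def uu (t x : ℕ) : ℕ := if x < t then x else x + 1
def dd (t x : ℕ) : ℕ := if x < t then x else x - 1

lemma dd_uu (t x : ℕ) : dd t (uu t x) = x := by
  unfold uu dd; split <;> simp_all <;> omega

lemma uu_ne (t x : ℕ) : uu t x ≠ t := by unfold uu; split <;> omega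

lemma uu_lt {t x m : ℕ} (ht : t ≤ m) (hx : x < m) : uu t x < m + 1 := by
  unfold uu; split <;> omega

def restr (m : ℕ) (f : ℕ → ℕ → ℕ) : Mat m := fun i j => f i j

def Ffun (m t : ℕ) (M : Mat m) (i j : ℕ) : ℕ :=
  if i + j ≤ m ∧ i ≠ t ∧ j ≠ t then ext M (dd t i) (dd t j) else 0

def Fmap (X : SMat) : SMat := ⟨X.1 + 1, restr _ (Ffun X.1 (X.1 / 2) X.2)⟩

def Gfun (m' t : ℕ) (A : Mat m') (p q : ℕ) : ℕ :=
  if p + q + 1 ≤ m' - 1 then ext A (uu t p) (uu t q)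
  else ext A (uu t (m' - 2 - q)) (uu t (m' - 2 - p))

def Gmap (Y : SMat) : SMat := ⟨Y.1 - 1, restr _ (Gfun Y.1 ((Y.1 - 1) / 2) Y.2)⟩

/-- Generic conversion of a double `Fin` sum to a double `range` sum. -/
lemma sum2_fin (m : ℕ) (g : Fin m → Fin m → ℕ) (f : ℕ → ℕ → ℕ)
    (h : ∀ i j : Fin m, g i j = f i j) :
    (∑ i : Fin m, ∑ j : Fin m, g i j) = ∑ i ∈ range m, ∑ j ∈ range m, f i j := by
  rw [← Fin.sum_univ_eq_sum_range (fun i => ∑ j ∈ range m, f i j) m]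
  refine Finset.sum_congr rfl fun i _ => ?_
  rw [← Fin.sum_univ_eq_sum_range (fun j => f i j) m]
  exact Finset.sum_congr rfl fun j _ => h i j

/-- Summing over `range (m+1)` with a zero at `t` equals reindexed sum over `range m`. -/
lemma sum_insert1 (m t : ℕ) (ht : t ≤ m) (f : ℕ → ℕ) (h0 : f t = 0) :
    ∑ i ∈ range (m + 1), f i = ∑ p ∈ range m, f (uu t p) := by
  induction m with
  | zero =>
      have : t = 0 := by omega
      subst this
      simp [h0]
  | succ m ih =>
      rcases Nat.lt_or_ge t (m + 1) with h | h
      · rw [Finset.sum_range_succ, Finset.sum_range_succ (fun p => f (uu t p)),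
          ih (by omega)]
        congr 1
        unfold uu; rw [if_neg (by omega)]
      · have ht' : t = m + 1 := by omega
        subst ht'
        rw [Finset.sum_range_succ, h0, add_zero]
        refine Finset.sum_congr rfl fun p hp => ?_
        simp only [mem_range] at hp
        unfold uu; rw [if_pos (by omega)]

end St11
namespace St11

lemma sum_insert2 (m t : ℕ) (ht : t ≤ m) (f : ℕ → ℕ → ℕ)
    (h0 : ∀ j, f t j = 0) (h0' : ∀ i, f i t = 0) :
    (∑ i ∈ range (m + 1), ∑ j ∈ range (m + 1), f i j)
      = ∑ p ∈ range m, ∑ q ∈ range m, f (uu t p) (uu t q) := by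
  rw [sum_insert1 m t ht (fun i => ∑ j ∈ range (m + 1), f i j)
    (by simp [h0])]
  refine Finset.sum_congr rfl fun p _ => ?_
  exact sum_insert1 m t ht (fun j => f (uu t p) j) (h0' _)

/-- Key pointwise lemma: the inserted matrix at cell `(uu p, uu q)` is the reduced
matrix of `M` at `(p,q)`. -/
lemma Ffun_uu (m t : ℕ) (hm : m = 2 * t) (M : Mat m) (p q : ℕ)
    (hp : p < m) (hq : q < m) :
    Ffun m t M (uu t p) (uu t q) = if p + q + 1 ≤ m then ext M p q else 0 := by
  unfold Ffun
  rw [dd_uu, dd_uu]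
  have h1 := uu_ne t p
  have h2 := uu_ne t q
  unfold uu at h1 h2 ⊢
  by_cases hpt : p < t <;> by_cases hqt : q < t <;>
    simp only [hpt, hqt, if_true, if_false] at h1 h2 ⊢ <;>
  · by_cases hc : p + q + 1 ≤ m
    · rw [if_pos hc, if_pos ⟨by omega, h1, h2⟩]
    · rw [if_neg hc, if_neg (by rintro ⟨h, -, -⟩; omega)]

end St11
namespace St11

lemma Ffun_left (m t : ℕ) (M : Mat m) (j : ℕ) : Ffun m t M t j = 0 := by
  unfold Ffun; rw [if_neg (by rintro ⟨-, h, -⟩; exact h rfl)]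

lemma Ffun_right (m t : ℕ) (M : Mat m) (i : ℕ) : Ffun m t M i t = 0 := by
  unfold Ffun; rw [if_neg (by rintro ⟨-, -, h⟩; exact h rfl)]

lemma S1 (m t : ℕ) (hm : m = 2 * t) (M : Mat m) :
    msize (restr (m + 1) (Ffun m t M)) = reducedSize M := by
  unfold msize reducedSize
  refine Eq.trans (sum2_fin (m + 1) _ (Ffun m t M) (fun i j => rfl)) ?_
  refine Eq.trans (sum_insert2 m t (by omega) _ (Ffun_left m t M) (Ffun_right m t M)) ?_
  refine Eq.trans ?_ (sum2_fin m _ (fun p q => if p + q + 1 ≤ m then ext M p q else 0)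
    (fun i j => by simp only [ext_eq])).symm
  refine Finset.sum_congr rfl fun p hp => Finset.sum_congr rfl fun q hq => ?_
  simp only [mem_range] at hp hq
  exact Ffun_uu m t hm M p q hp hq

lemma S2 (m t : ℕ) (hm : m = 2 * t) (ht : 1 ≤ t) (M : Mat m) :
    firstRowSum (restr (m + 1) (Ffun m t M)) = firstRowSum M := by
  unfold firstRowSum
  refine Eq.trans (sum2_fin (m + 1) _ (fun i j => if i = 0 then Ffun m t M i j else 0)
    (fun i j => rfl)) ?_
  refine Eq.trans (sum_insert2 m t (by omega) _
    (fun j => by rw [if_neg (by omega)])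
    (fun i => by show (if i = 0 then Ffun m t M i t else 0) = 0; split <;> simp [Ffun_right])) ?_
  refine Eq.trans ?_ (sum2_fin m _ (fun p q => if p = 0 then ext M p q else 0)
    (fun i j => by simp only [ext_eq])).symm
  refine Finset.sum_congr rfl fun p hp => Finset.sum_congr rfl fun q hq => ?_
  simp only [mem_range] at hp hq
  have hu : uu t p = 0 ↔ p = 0 := by unfold uu; split <;> omega
  by_cases h0 : p = 0
  · rw [if_pos (hu.mpr h0), if_pos h0, Ffun_uu m t hm M p q hp hq,
      if_pos (by omega)]
  · rw [if_neg (fun h => h0 (hu.mp h)), if_neg h0]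

lemma S3 (m t : ℕ) (hm : m = 2 * t) (M : Mat m) :
    centerColSum (restr (m + 1) (Ffun m t M)) = 0 := by
  unfold centerColSum
  refine Finset.sum_eq_zero fun i _ => Finset.sum_eq_zero fun j _ => ?_
  split
  · rename_i h
    have hj : (j : ℕ) = t := by omega
    show Ffun m t M i j = 0
    rw [hj]; exact Ffun_right m t M i
  · rfl

end St11
namespace St11

lemma ut_ext {m : ℕ} {M : Mat m} (h : UT M) {p q : ℕ} (hqp : q < p) :
    ext M p q = 0 := by
  unfold ext; split
  · exact h _ _ hqp
  · rfl

lemma sd_ext {m : ℕ} {M : Mat m} (h : SelfDual M) {p q : ℕ} (hp : p < m) (hq : q < m) :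
    ext M p q = ext M (m - 1 - q) (m - 1 - p) := by
  rw [ext_lt M hp hq, ext_lt M (show m - 1 - q < m by omega) (show m - 1 - p < m by omega)]
  conv_lhs => rw [h]
  show M (Fin.rev _) (Fin.rev _) = _
  congr 1 <;> (apply Fin.ext; rw [Fin.val_rev]; simp; omega)

lemma fwd_struct (m t n k : ℕ) (hm : m = 2 * t) (ht : 1 ≤ t) (M : Mat m)
    (hF : IsFishburn M) (hSD : SelfDual M) (hrs : reducedSize M = n)
    (hfr : firstRowSum M = k) :
    (⟨m + 1, restr (m + 1) (Ffun m t M)⟩ : SMat) ∈ SMset₃ n k 0 := by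
  obtain ⟨hUT, hrow, hcol⟩ := hF
  refine ⟨⟨?_, ?_, ?_⟩, ?_, ?_⟩
  · -- SuperTri
    constructor
    · intro i j hij
      show Ffun m t M i j = 0
      unfold Ffun; split
      · rename_i hc
        obtain ⟨-, hi, hj⟩ := hc
        refine ut_ext hUT ?_
        unfold dd; split <;> split <;> omega
      · rfl
    · intro i j hij
      have hij' : m + 1 < (i : ℕ) + (j : ℕ) + 1 := hij
      show Ffun m t M i j = 0
      unfold Ffun; rw [if_neg (by rintro ⟨h, -, -⟩; omega)]
  · -- msize
    rw [S1 m t hm M]; exact hrs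
  · -- existential
    refine ⟨t, show m + 1 = 2 * t + 1 by omega, ?_, ?_⟩
    · -- (a) columns j < t nonzero
      intro j hj
      have hjm1 : (j : ℕ) < m + 1 := j.isLt
      obtain ⟨i, hi⟩ := hcol ⟨(j : ℕ), by omega⟩
      have hij : (i : ℕ) ≤ (j : ℕ) := by
        by_contra hc
        exact hi (hUT _ _ (by simpa using Nat.lt_of_not_le hc))
      refine ⟨⟨(i : ℕ), by omega⟩, ?_⟩
      show Ffun m t M (i : ℕ) (j : ℕ) ≠ 0
      unfold Ffun
      rw [if_pos ⟨by omega, by omega, by omega⟩]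
      unfold dd
      rw [if_pos (by omega), if_pos (by omega),
        ext_lt M (by omega) (by omega)]
      simpa using hi
    · -- (b)
      intro a b ha hab
      have ham : (a : ℕ) < m + 1 := a.isLt
      have hbm : (b : ℕ) < m + 1 := b.isLt
      obtain ⟨j, hj⟩ := hrow ⟨(a : ℕ), by omega⟩
      by_cases hred : (a : ℕ) + (j : ℕ) + 1 ≤ m
      · left
        refine ⟨⟨uu t (j : ℕ), uu_lt (by omega) j.isLt⟩, ?_⟩
        show Ffun m t M (a : ℕ) (uu t (j : ℕ)) ≠ 0
        have hua : (a : ℕ) = uu t (a : ℕ) := by unfold uu; rw [if_pos (by omega)]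
        rw [hua, Ffun_uu m t hm M _ _ (by omega) j.isLt, if_pos hred,
          ext_lt M (by omega) j.isLt]
        simpa using hj
      · right
        have hjm : (j : ℕ) < m := j.isLt
        refine ⟨⟨uu t (m - 1 - (j : ℕ)), uu_lt (by omega) (by omega)⟩, ?_⟩
        show Ffun m t M (uu t (m - 1 - (j : ℕ))) (b : ℕ) ≠ 0
        have hub : (b : ℕ) = uu t (m - 1 - (a : ℕ)) := by
          unfold uu; rw [if_neg (by omega)]; omega
        rw [hub, Ffun_uu m t hm M _ _ (by omega) (by omega),
          if_pos (by omega), ← sd_ext hSD (by omega) hjm,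
          ext_lt M (by omega) hjm]
        simpa using hj
  · rw [S2 m t hm ht M]; exact hfr
  · exact S3 m t hm M

end St11
namespace St11

lemma smat_eq {m : ℕ} {M N : Mat m} (h : ∀ i j, M i j = N i j) :
    (⟨m, M⟩ : SMat) = ⟨m, N⟩ := by
  have : M = N := funext fun i => funext fun j => h i j
  rw [this]

lemma uu_dd (t : ℕ) {x : ℕ} (hx : x ≠ t) : uu t (dd t x) = x := by
  unfold uu dd
  by_cases h : x < t
  · rw [if_pos h, if_pos h]
  · rw [if_neg h, if_neg (by omega)]; omega

lemma ext_restr (m : ℕ) (f : ℕ → ℕ → ℕ) {a b : ℕ} (ha : a < m) (hb : b < m) :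
    ext (restr m f) a b = f a b := by
  simp [ext, restr, ha, hb]

lemma gf_struct (m t : ℕ) (hm : m = 2 * t) (M : Mat m)
    (hUT : UT M) (hSD : SelfDual M) :
    Gmap ⟨m + 1, restr (m + 1) (Ffun m t M)⟩ = ⟨m, M⟩ := by
  have hdiv : (m + 1 - 1) / 2 = t := by omega
  have hG : Gmap ⟨m + 1, restr (m + 1) (Ffun m t M)⟩
      = (⟨m, restr m (Gfun (m + 1) t (restr (m + 1) (Ffun m t M)))⟩ : SMat) := by
    show (⟨m, restr m (Gfun (m + 1) ((m + 1 - 1) / 2) (restr (m + 1) (Ffun m t M)))⟩ : SMat) = _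
    rw [hdiv]
  rw [hG]
  refine smat_eq fun p q => ?_
  show Gfun (m + 1) t (restr (m + 1) (Ffun m t M)) (p : ℕ) (q : ℕ) = M p q
  have hp : (p : ℕ) < m := p.isLt
  have hq : (q : ℕ) < m := q.isLt
  unfold Gfun
  by_cases hc : (p : ℕ) + (q : ℕ) + 1 ≤ m
  · rw [if_pos (by omega),
      ext_restr (m + 1) _ (uu_lt (by omega) hp) (uu_lt (by omega) hq),
      Ffun_uu m t hm M _ _ hp hq, if_pos hc, ext_eq]
  · rw [if_neg (by omega),
      show m + 1 - 2 - (q : ℕ) = m - 1 - (q : ℕ) by omega,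
      show m + 1 - 2 - (p : ℕ) = m - 1 - (p : ℕ) by omega,
      ext_restr (m + 1) _ (uu_lt (by omega) (by omega)) (uu_lt (by omega) (by omega)),
      Ffun_uu m t hm M _ _ (by omega) (by omega), if_pos (by omega),
      ← sd_ext hSD hp hq, ext_eq]

end St11
namespace St11

lemma uu_self {t x : ℕ} (h : x < t) : uu t x = x := by unfold uu; rw [if_pos h]
lemma uu_succ {t x : ℕ} (h : ¬ x < t) : uu t x = x + 1 := by unfold uu; rw [if_neg h]

lemma cell_of_ext {m : ℕ} (M : Mat m) {p q : ℕ} (hp : p < m) (hq : q < m)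
    (h : ext M p q ≠ 0) : M ⟨p, hp⟩ ⟨q, hq⟩ ≠ 0 := by
  rwa [ext_lt M hp hq] at h

section Bwd

variable (t n k : ℕ) (A : Mat (2 * t + 1))

/-- abbreviation for the pulled-back matrix -/
def GM (t : ℕ) (A : Mat (2 * t + 1)) : Mat (2 * t) :=
  restr (2 * t) (Gfun (2 * t + 1) t A)

lemma hcol0 (hcc : centerColSum A = 0) :
    ∀ (i j : Fin (2 * t + 1)), (j : ℕ) = t → A i j = 0 := by
  intro i j hj
  have h1 := hcc
  unfold centerColSum at h1
  rw [Finset.sum_eq_zero_iff] at h1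
  have h2 := h1 i (mem_univ i)
  rw [Finset.sum_eq_zero_iff] at h2
  have h3 := h2 j (mem_univ j)
  rwa [if_pos (by omega)] at h3

lemma hz (hUTA : UT A)
    (hSE : ∀ i j : Fin (2 * t + 1), 2 * t + 1 < (i : ℕ) + (j : ℕ) + 1 → A i j = 0)
    (hcc : centerColSum A = 0) :
    ∀ p q : ℕ, (p = t ∨ q = t ∨ q < p ∨ 2 * t < p + q) → ext A p q = 0 := by
  intro p q h
  unfold ext; split
  · rename_i hpq
    by_cases h1 : q < p
    · exact hUTA _ _ h1
    · by_cases h2 : q = t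
      · exact hcol0 t A hcc _ _ h2
      · exact hSE ⟨p, hpq.1⟩ ⟨q, hpq.2⟩ (show 2 * t + 1 < p + q + 1 by omega)
  · rfl

lemma hone : ∀ p q : ℕ, p < 2 * t → q < 2 * t → p + q + 1 ≤ 2 * t →
    ext (GM t A) p q = ext A (uu t p) (uu t q) := by
  intro p q hp hq h
  rw [show ext (GM t A) p q = ext (restr (2 * t) (Gfun (2 * t + 1) t A)) p q from rfl,
    ext_restr _ _ hp hq]
  unfold Gfun
  rw [if_pos (by omega)]

lemma htwo : ∀ p q : ℕ, p < 2 * t → q < 2 * t → 2 * t < p + q + 1 →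
    ext (GM t A) p q = ext A (uu t (2 * t - 1 - q)) (uu t (2 * t - 1 - p)) := by
  intro p q hp hq h
  rw [show ext (GM t A) p q = ext (restr (2 * t) (Gfun (2 * t + 1) t A)) p q from rfl,
    ext_restr _ _ hp hq]
  unfold Gfun
  rw [if_neg (by omega), show 2 * t + 1 - 2 - q = 2 * t - 1 - q by omega,
    show 2 * t + 1 - 2 - p = 2 * t - 1 - p by omega]

lemma fg_pointwise (hUTA : UT A)
    (hSE : ∀ i j : Fin (2 * t + 1), 2 * t + 1 < (i : ℕ) + (j : ℕ) + 1 → A i j = 0)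
    (hcc : centerColSum A = 0) :
    ∀ i j : Fin (2 * t + 1), Ffun (2 * t) t (GM t A) (i : ℕ) (j : ℕ) = A i j := by
  intro i j
  have hi : (i : ℕ) < 2 * t + 1 := i.isLt
  have hj : (j : ℕ) < 2 * t + 1 := j.isLt
  by_cases hc : (i : ℕ) + (j : ℕ) ≤ 2 * t ∧ (i : ℕ) ≠ t ∧ (j : ℕ) ≠ t
  · obtain ⟨h1, h2, h3⟩ := hc
    unfold Ffun
    rw [if_pos ⟨h1, h2, h3⟩]
    have hddi : dd t (i : ℕ) < 2 * t := by unfold dd; split <;> omega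
    have hddj : dd t (j : ℕ) < 2 * t := by unfold dd; split <;> omega
    have hsum : dd t (i : ℕ) + dd t (j : ℕ) + 1 ≤ 2 * t := by
      unfold dd; split <;> split <;> omega
    rw [hone t A _ _ hddi hddj hsum, uu_dd t h2, uu_dd t h3, ext_eq]
  · unfold Ffun
    rw [if_neg hc]
    have h := hz t A hUTA hSE hcc (i : ℕ) (j : ℕ) (by omega)
    rw [ext_eq] at h
    exact h.symm

lemma hGm : Gmap ⟨2 * t + 1, A⟩ = (⟨2 * t, GM t A⟩ : SMat) := by
  have hdiv : (2 * t + 1 - 1) / 2 = t := by omega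
  show (⟨2 * t, restr (2 * t) (Gfun (2 * t + 1) ((2 * t + 1 - 1) / 2) A)⟩ : SMat) = _
  rw [hdiv]; rfl

lemma hFm : Fmap ⟨2 * t, GM t A⟩
    = (⟨2 * t + 1, restr (2 * t + 1) (Ffun (2 * t) t (GM t A))⟩ : SMat) := by
  have hdiv : 2 * t / 2 = t := by omega
  show (⟨2 * t + 1, restr (2 * t + 1) (Ffun (2 * t) (2 * t / 2) (GM t A))⟩ : SMat) = _
  rw [hdiv]

lemma fg_struct (hUTA : UT A)
    (hSE : ∀ i j : Fin (2 * t + 1), 2 * t + 1 < (i : ℕ) + (j : ℕ) + 1 → A i j = 0)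
    (hcc : centerColSum A = 0) :
    Fmap (Gmap ⟨2 * t + 1, A⟩) = ⟨2 * t + 1, A⟩ := by
  rw [hGm, hFm]
  exact smat_eq fun i j => fg_pointwise t A hUTA hSE hcc i j

end Bwd

end St11
namespace St11

section Bwd2

variable (t n k : ℕ) (A : Mat (2 * t + 1))

lemma GM_UT (hUTA : UT A) : UT (GM t A) := by
  intro i j hij
  have hi : (i : ℕ) < 2 * t := i.isLt
  have hj : (j : ℕ) < 2 * t := j.isLt
  show Gfun (2 * t + 1) t A (i : ℕ) (j : ℕ) = 0
  unfold Gfun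
  split
  · refine ut_ext hUTA ?_
    unfold uu; split <;> split <;> omega
  · refine ut_ext hUTA ?_
    unfold uu; split <;> split <;> omega

lemma GM_SD (hUTA : UT A)
    (hSE : ∀ i j : Fin (2 * t + 1), 2 * t + 1 < (i : ℕ) + (j : ℕ) + 1 → A i j = 0)
    (hcc : centerColSum A = 0) : SelfDual (GM t A) := by
  show GM t A = dual (GM t A)
  funext i j
  show GM t A i j = GM t A j.rev i.rev
  have hi : (i : ℕ) < 2 * t := i.isLt
  have hj : (j : ℕ) < 2 * t := j.isLt
  rw [← ext_eq (GM t A) i j, ← ext_eq (GM t A) j.rev i.rev]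
  have hrv : ((j.rev : Fin (2 * t)) : ℕ) = 2 * t - 1 - (j : ℕ) := by
    rw [Fin.val_rev]; omega
  have hrv2 : ((i.rev : Fin (2 * t)) : ℕ) = 2 * t - 1 - (i : ℕ) := by
    rw [Fin.val_rev]; omega
  rw [hrv, hrv2]
  rcases Nat.lt_trichotomy ((i : ℕ) + (j : ℕ) + 1) (2 * t) with h | h | h
  · rw [hone t A _ _ hi hj (by omega), htwo t A _ _ (by omega) (by omega) (by omega),
      show 2 * t - 1 - (2 * t - 1 - (i : ℕ)) = (i : ℕ) by omega,
      show 2 * t - 1 - (2 * t - 1 - (j : ℕ)) = (j : ℕ) by omega]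
  · rw [show 2 * t - 1 - (j : ℕ) = (i : ℕ) by omega,
      show 2 * t - 1 - (i : ℕ) = (j : ℕ) by omega]
  · rw [htwo t A _ _ hi hj (by omega), hone t A _ _ (by omega) (by omega) (by omega)]

lemma GM_col_lt (hUTA : UT A)
    (ha : ∀ j : Fin (2 * t + 1), (j : ℕ) < t → colNonzero A j) :
    ∀ j : Fin (2 * t), (j : ℕ) < t → colNonzero (GM t A) j := by
  intro j hj
  obtain ⟨i', hi'⟩ := ha ⟨(j : ℕ), by omega⟩ hj
  have hii : (i' : ℕ) ≤ (j : ℕ) := by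
    by_contra hcon
    exact hi' (hUTA i' ⟨(j : ℕ), by omega⟩ (show (j : ℕ) < (i' : ℕ) by omega))
  refine ⟨⟨(i' : ℕ), by omega⟩, ?_⟩
  refine cell_of_ext (GM t A) (by omega) j.isLt ?_
  rw [hone t A _ _ (by omega) j.isLt (by omega), uu_self (by omega : (i' : ℕ) < t),
    uu_self hj, ext_lt A (by omega) (by omega)]
  exact hi'

lemma GM_row_lt (hUTA : UT A)
    (hSE : ∀ i j : Fin (2 * t + 1), 2 * t + 1 < (i : ℕ) + (j : ℕ) + 1 → A i j = 0)
    (hcc : centerColSum A = 0)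
    (hb : ∀ a b : Fin (2 * t + 1), (a : ℕ) < t → (a : ℕ) + (b : ℕ) = 2 * t →
      rowNonzero A a ∨ colNonzero A b) :
    ∀ i : Fin (2 * t), (i : ℕ) < t → rowNonzero (GM t A) i := by
  intro i hi
  have hzA := hz t A hUTA hSE hcc
  rcases hb ⟨(i : ℕ), by omega⟩ ⟨2 * t - (i : ℕ), by omega⟩ hi (show (i : ℕ) + (2 * t - (i : ℕ)) = 2 * t by omega) with
    ⟨j', hj'⟩ | ⟨i', hi'⟩
  · -- row (i) of A nonzero at column j'
    have hjt : (j' : ℕ) ≠ t := by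
      intro hc
      exact hj' (by rw [← ext_eq A _ j']; exact hzA (i : ℕ) (j' : ℕ) (by omega))
    have hse : (i : ℕ) + (j' : ℕ) ≤ 2 * t := by
      by_contra hcon
      exact hj' (by rw [← ext_eq A _ j']; exact hzA (i : ℕ) (j' : ℕ) (by omega))
    have hdj : dd t (j' : ℕ) < 2 * t := by
      have := j'.isLt; unfold dd; split <;> omega
    refine ⟨⟨dd t (j' : ℕ), hdj⟩, ?_⟩
    refine cell_of_ext (GM t A) (by omega) hdj ?_
    rw [hone t A _ _ (by omega) hdj (by unfold dd; split <;> omega),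
      uu_self (show (i : ℕ) < t by omega), uu_dd t hjt,
      ext_lt A (by omega) j'.isLt]
    exact hj'
  · -- column (2t - i) of A nonzero at row i'
    have hit : (i' : ℕ) ≠ t := by
      intro hc
      exact hi' (by rw [← ext_eq A i' _]; exact hzA (i' : ℕ) (2 * t - (i : ℕ)) (by omega))
    have hse : (i' : ℕ) + (2 * t - (i : ℕ)) ≤ 2 * t := by
      by_contra hcon
      exact hi' (by rw [← ext_eq A i' _]; exact hzA (i' : ℕ) (2 * t - (i : ℕ)) (by omega))
    have hii' : (i' : ℕ) ≤ (i : ℕ) := by omega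
    have hq : 2 * t - 1 - (i' : ℕ) < 2 * t := by omega
    refine ⟨⟨2 * t - 1 - (i' : ℕ), hq⟩, ?_⟩
    refine cell_of_ext (GM t A) (by omega) hq ?_
    have hval : ext A ((i' : ℕ)) (2 * t - (i : ℕ)) ≠ 0 := by
      rw [ext_lt A i'.isLt (by omega)]
      exact hi'
    rcases Nat.lt_or_ge (i' : ℕ) (i : ℕ) with hlt | hge
    · rw [htwo t A _ _ (by omega) hq (by omega),
        show 2 * t - 1 - (2 * t - 1 - (i' : ℕ)) = (i' : ℕ) by omega,
        uu_self (show (i' : ℕ) < t by omega),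
        uu_succ (show ¬ 2 * t - 1 - (i : ℕ) < t by omega),
        show 2 * t - 1 - (i : ℕ) + 1 = 2 * t - (i : ℕ) by omega]
      exact hval
    · have heq : (i' : ℕ) = (i : ℕ) := by omega
      rw [hone t A _ _ (by omega) hq (by omega),
        uu_self (show (i : ℕ) < t by omega),
        uu_succ (show ¬ 2 * t - 1 - (i' : ℕ) < t by omega),
        show 2 * t - 1 - (i' : ℕ) + 1 = 2 * t - (i : ℕ) by omega]
      rw [heq] at hval
      exact hval

end Bwd2

end St11
namespace St11

section Bwd3

variable (t n k : ℕ) (A : Mat (2 * t + 1))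

lemma rows_all (hSDM : SelfDual (GM t A))
    (hrow_lt : ∀ i : Fin (2 * t), (i : ℕ) < t → rowNonzero (GM t A) i)
    (hcol_lt : ∀ j : Fin (2 * t), (j : ℕ) < t → colNonzero (GM t A) j) :
    ∀ i : Fin (2 * t), rowNonzero (GM t A) i := by
  intro i
  rcases Nat.lt_or_ge (i : ℕ) t with h | h
  · exact hrow_lt i h
  · have hrv : ((i.rev : Fin (2 * t)) : ℕ) < t := by
      rw [Fin.val_rev]; have := i.isLt; omega
    obtain ⟨p, hp⟩ := hcol_lt i.rev hrv
    refine ⟨p.rev, fun hcon => hp ?_⟩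
    have he : GM t A i p.rev = dual (GM t A) i p.rev := by rw [← hSDM]
    rw [he] at hcon
    show GM t A p i.rev = 0
    rw [← Fin.rev_rev p]
    exact hcon

lemma cols_all (hSDM : SelfDual (GM t A))
    (hrow_lt : ∀ i : Fin (2 * t), (i : ℕ) < t → rowNonzero (GM t A) i)
    (hcol_lt : ∀ j : Fin (2 * t), (j : ℕ) < t → colNonzero (GM t A) j) :
    ∀ j : Fin (2 * t), colNonzero (GM t A) j := by
  intro j
  rcases Nat.lt_or_ge (j : ℕ) t with h | h
  · exact hcol_lt j h
  · have hrv : ((j.rev : Fin (2 * t)) : ℕ) < t := by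
      rw [Fin.val_rev]; have := j.isLt; omega
    obtain ⟨q, hq⟩ := hrow_lt j.rev hrv
    refine ⟨q.rev, fun hcon => hq ?_⟩
    have he : GM t A q.rev j = dual (GM t A) q.rev j := by rw [← hSDM]
    rw [he] at hcon
    show GM t A j.rev q = 0
    rw [← Fin.rev_rev q]
    exact hcon

lemma bwd_struct (ht : 1 ≤ t) (hUTA : UT A)
    (hSE : ∀ i j : Fin (2 * t + 1), 2 * t + 1 < (i : ℕ) + (j : ℕ) + 1 → A i j = 0)
    (hms : msize A = n)
    (ha : ∀ j : Fin (2 * t + 1), (j : ℕ) < t → colNonzero A j)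
    (hb : ∀ a b : Fin (2 * t + 1), (a : ℕ) < t → (a : ℕ) + (b : ℕ) = 2 * t →
      rowNonzero A a ∨ colNonzero A b)
    (hfr : firstRowSum A = k) (hcc : centerColSum A = 0) :
    (⟨2 * t, GM t A⟩ : SMat) ∈ EMset n k := by
  have hAA : restr (2 * t + 1) (Ffun (2 * t) t (GM t A)) = A :=
    funext fun i => funext fun j => fg_pointwise t A hUTA hSE hcc i j
  have hSDM := GM_SD t A hUTA hSE hcc
  have hrow_lt := GM_row_lt t A hUTA hSE hcc hb
  have hcol_lt := GM_col_lt t A hUTA ha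
  refine ⟨⟨⟨⟨GM_UT t A hUTA,
      rows_all t A hSDM hrow_lt hcol_lt,
      cols_all t A hSDM hrow_lt hcol_lt⟩, hSDM, ?_⟩, ?_⟩, ⟨t, by ring⟩⟩
  · rw [← S1 (2 * t) t rfl (GM t A), hAA]; exact hms
  · rw [← S2 (2 * t) t rfl ht (GM t A), hAA]; exact hfr

end Bwd3

end St11
namespace St11

lemma Fmap_eq (m t : ℕ) (hm : m = 2 * t) (M : Mat m) :
    Fmap ⟨m, M⟩ = (⟨m + 1, restr (m + 1) (Ffun m t M)⟩ : SMat) := by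
  show (⟨m + 1, restr (m + 1) (Ffun m (m / 2) M)⟩ : SMat) = _
  rw [show m / 2 = t by omega]

lemma gf_mem (n k : ℕ) : ∀ X ∈ EMset n k, Gmap (Fmap X) = X := by
  rintro ⟨m, M⟩ ⟨⟨⟨⟨hUT, -, -⟩, hSD, -⟩, -⟩, heven⟩
  obtain ⟨t, hm⟩ := heven
  have hm2 : m = t + t := hm
  rw [Fmap_eq m t (by omega) M]
  exact gf_struct m t (by omega) M hUT hSD

end St11

open St11 in
theorem stmt11' (n k : ℕ) (hn : 1 ≤ n) :
    (EMset n k).ncard = (SMset₃ n k 0).ncard := by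
  have himg : Fmap '' EMset n k = SMset₃ n k 0 := by
    apply Set.Subset.antisymm
    · rintro Y ⟨X, hX, rfl⟩
      obtain ⟨m, M⟩ := X
      obtain ⟨⟨⟨hfish, hsd, hrs⟩, hfr⟩, heven⟩ := hX
      obtain ⟨t, hm⟩ := heven
      have hm2 : m = t + t := hm
      have hm3 : m = 2 * t := by omega
      subst hm3
      have ht1 : 1 ≤ t := by
        by_contra hc
        have hz : reducedSize M = 0 := by
          unfold reducedSize
          refine Finset.sum_eq_zero fun i _ => ?_
          exact absurd i.isLt (by omega)
        have hrs' : reducedSize M = n := hrs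
        omega
      rw [Fmap_eq (2 * t) t rfl M]
      exact fwd_struct (2 * t) t n k rfl ht1 M hfish hsd hrs hfr
    · intro Y hY
      obtain ⟨m', A⟩ := Y
      obtain ⟨⟨⟨hUTA, hSE⟩, hms, t, hm', ha, hb⟩, hfr, hcc⟩ := hY
      have hm2 : m' = 2 * t + 1 := hm'
      subst hm2
      have ht1 : 1 ≤ t := by
        by_contra hc
        have hmc : msize A = centerColSum A := by
          unfold msize centerColSum
          refine Finset.sum_congr rfl fun i _ => Finset.sum_congr rfl fun j _ => ?_
          have := j.isLt
          rw [if_pos (by omega)]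
        have hms' : msize A = n := hms
        have hcc' : centerColSum A = 0 := hcc
        omega
      refine ⟨Gmap ⟨2 * t + 1, A⟩, ?_, ?_⟩
      · rw [hGm]
        exact bwd_struct t n k A ht1 hUTA hSE hms ha hb hfr hcc
      · exact fg_struct t A hUTA hSE hcc
  have hinj : Set.InjOn Fmap (EMset n k) := by
    intro X hX X' hX' he
    rw [← gf_mem n k X hX, he, gf_mem n k X' hX']
  rw [← himg, Set.ncard_image_of_injOn hinj]

/-- `|EM(n,k)| = |SM(n,k,0)|` for all `n ≥ 1`, `k ≥ 0`. -/
theorem stmt11 (n k : ℕ) (hn : 1 ≤ n) :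
    (EMset n k).ncard = (SMset₃ n k 0).ncard := by
  exact stmt11' n k hn
end

section
/- For all n ≥ 1 and k ≥ 0, the number of self-dual Fishburn matrices of reduced size n with first-row sum k and even dimension equals the number of row-Fishburn matrices of size n whose last column has sum k; that is, |EM(n,k)| = |RM(n,k)|. -/
open Finset

/-!
An even self-dual Fishburn matrix of dimension `2m` is determined by its cells on or above the
antidiagonal.  These form its NW quadrant `L` and, reading the columns backwards, an
upper-triangular part `V` of its NE quadrant.  The reduced size is the size of `L` plus that of
`V`, and the Fishburn conditions say that every column of `L` is nonzero and that for every `i`,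
row `i` of `L`, row `i` of `V` or column `i` of `V` is nonzero.

Merge `L` and `V` into one upper-triangular matrix: after every index `c` whose `V`-column is
nonzero, insert a new index whose column is that `V`-column and whose row is zero.  All columns of
the result are nonzero, and the conditions above are exactly what is needed to tell the new zero
rows from the old ones, so merging is a bijection onto the upper-triangular matrices with nonzero
columns, preserving size and first-row sum.  The antidiagonal transpose `dual` then takes these to
the row-Fishburn matrices, and the first row to the last column.
-/

noncomputable section

namespace Fishburn

open scoped Classical

/-! ### Grids -/

abbrev Grid := ℕ → ℕ → ℕ

variable {d m n k : ℕ} {G C : Grid}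

def IsUpper (d : ℕ) (G : Grid) : Prop := ∀ p q, G p q ≠ 0 → p ≤ q ∧ q < d

def rowSum (d : ℕ) (G : Grid) (p : ℕ) : ℕ := ∑ q ∈ range d, G p q

def total (d : ℕ) (G : Grid) : ℕ := ∑ p ∈ range d, rowSum d G p

def reducedTotal (d : ℕ) (G : Grid) : ℕ :=
  ∑ p ∈ range d, ∑ q ∈ range d, if p + q + 1 ≤ d then G p q else 0

def RowNonzero (G : Grid) (p : ℕ) : Prop := ∃ q, G p q ≠ 0

def ColNonzero (G : Grid) (q : ℕ) : Prop := ∃ p, G p q ≠ 0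

lemma IsUpper.eq_zero (h : IsUpper d G) {p q : ℕ} (hpq : ¬ (p ≤ q ∧ q < d)) : G p q = 0 :=
  not_imp_comm.mp (h p q) hpq

def toGrid (A : SMat) : Grid := fun p q =>
  if h : p < A.1 ∧ q < A.1 then A.2 ⟨p, h.1⟩ ⟨q, h.2⟩ else 0

def gridMat (d : ℕ) (G : Grid) : Mat d := fun i j => G i j

def ofGrid (d : ℕ) (G : Grid) : SMat := ⟨d, gridMat d G⟩

lemma toGrid_apply (A : SMat) (i j : Fin A.1) : toGrid A i j = A.2 i j := dif_pos ⟨i.2, j.2⟩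

lemma ofGrid_toGrid (A : SMat) : ofGrid A.1 (toGrid A) = A := by
  obtain ⟨d, M⟩ := A
  refine congrArg (Sigma.mk d) (funext₂ fun i j => ?_)
  exact toGrid_apply ⟨d, M⟩ i j

lemma toGrid_ofGrid (h : IsUpper d G) : toGrid (ofGrid d G) = G := by
  funext p q
  by_cases hpq : p < d ∧ q < d
  · exact dif_pos hpq
  · exact (dif_neg hpq).trans (h.eq_zero (by omega)).symm

lemma isUpper_toGrid {A : SMat} (hA : UT A.2) : IsUpper A.1 (toGrid A) := by
  intro p q h
  by_cases hpq : p < A.1 ∧ q < A.1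
  · refine ⟨not_lt.mp fun hqp => h ?_, hpq.2⟩
    exact (dif_pos hpq).trans (hA _ _ hqp)
  · exact absurd (dif_neg hpq) h

lemma ut_gridMat (h : IsUpper d G) : UT (gridMat d G) :=
  fun _ _ hji => h.eq_zero (by omega)

lemma sum_fin_eq_sum_range (f : ℕ → ℕ → ℕ) :
    ∑ i : Fin d, ∑ j : Fin d, f i j = ∑ p ∈ range d, ∑ q ∈ range d, f p q :=
  (Finset.sum_congr rfl fun (i : Fin d) _ => Fin.sum_univ_eq_sum_range (fun q => f i q) d).trans
    (Fin.sum_univ_eq_sum_range (fun p => ∑ q ∈ range d, f p q) d)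

lemma msize_gridMat : msize (gridMat d G) = total d G := sum_fin_eq_sum_range G

lemma reducedSize_gridMat : reducedSize (gridMat d G) = reducedTotal d G :=
  sum_fin_eq_sum_range fun p q => if p + q + 1 ≤ d then G p q else 0

lemma firstRowSum_gridMat : firstRowSum (gridMat d G) = rowSum d G 0 := by
  unfold firstRowSum gridMat
  rw [sum_fin_eq_sum_range fun p q => if p = 0 then G p q else 0]
  rcases d with _ | d
  · simp [rowSum]
  · simp [Finset.sum_ite_eq', rowSum]

lemma rowNonzero_gridMat_iff (h : IsUpper d G) (i : Fin d) :
    rowNonzero (gridMat d G) i ↔ RowNonzero G i :=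
  ⟨fun ⟨j, hj⟩ => ⟨j, hj⟩, fun ⟨q, hq⟩ => ⟨⟨q, (h _ _ hq).2⟩, hq⟩⟩

lemma colNonzero_gridMat_iff (h : IsUpper d G) (j : Fin d) :
    colNonzero (gridMat d G) j ↔ ColNonzero G j :=
  ⟨fun ⟨i, hi⟩ => ⟨i, hi⟩,
    fun ⟨p, hp⟩ => ⟨⟨p, (h _ _ hp).1.trans_lt j.2⟩, hp⟩⟩

lemma selfDual_gridMat_iff :
    SelfDual (gridMat d G) ↔ ∀ p < d, ∀ q < d, G p q = G (d - 1 - q) (d - 1 - p) := by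
  rw [SelfDual, ← Matrix.ext_iff]
  simp only [dual, gridMat, Fin.forall_iff, Fin.val_rev]
  refine forall₂_congr fun p _ => forall₂_congr fun q _ => ?_
  rw [show d - (q + 1) = d - 1 - q by omega, show d - (p + 1) = d - 1 - p by omega]

def gridsOf (S : Set SMat) : Set (ℕ × Grid) := {Q | IsUpper Q.1 Q.2 ∧ ofGrid Q.1 Q.2 ∈ S}

lemma ncard_eq_ncard_gridsOf (S : Set SMat) (hS : ∀ A ∈ S, UT A.2) :
    S.ncard = (gridsOf S).ncard := by
  refine Set.BijOn.ncard_eq (f := fun A => (A.1, toGrid A)) (Set.InvOn.bijOn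
    (f' := fun Q => ofGrid Q.1 Q.2) ⟨fun A _ => ofGrid_toGrid A, fun Q hQ => ?_⟩ ?_ ?_)
  · exact Prod.ext rfl (toGrid_ofGrid hQ.1)
  · exact fun A hA => ⟨isUpper_toGrid (hS A hA), (ofGrid_toGrid A).symm ▸ hA⟩
  · exact fun Q hQ => hQ.2

/-! ### The antidiagonal transpose -/

lemma dual_dual (M : Mat m) : dual (dual M) = M := by
  ext i j
  simp [dual]

lemma ut_dual {M : Mat m} (h : UT M) : UT (dual M) := fun i j hji =>
  h _ _ (by simp only [Fin.val_rev]; omega)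

lemma msize_dual (M : Mat m) : msize (dual M) = msize M := by
  unfold msize dual
  rw [Finset.sum_comm, ← Equiv.sum_comp Fin.revPerm]
  refine Finset.sum_congr rfl fun i _ => ?_
  rw [← Equiv.sum_comp Fin.revPerm]
  simp

lemma lastColSum_dual (M : Mat m) : lastColSum (dual M) = firstRowSum M := by
  unfold lastColSum firstRowSum dual
  rw [Finset.sum_comm, ← Equiv.sum_comp Fin.revPerm]
  refine Finset.sum_congr rfl fun i _ => ?_
  rw [← Equiv.sum_comp Fin.revPerm]
  refine Finset.sum_congr rfl fun j _ => ?_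
  simp only [Fin.revPerm_apply, Fin.rev_rev, Fin.val_rev]
  have := i.isLt
  congr 1
  exact propext (by omega)

lemma firstRowSum_dual (M : Mat m) : firstRowSum (dual M) = lastColSum M := by
  rw [← lastColSum_dual, dual_dual]

lemma rowNonzero_dual_iff (M : Mat m) (i : Fin m) : rowNonzero (dual M) i ↔ colNonzero M i.rev :=
  ⟨fun ⟨j, h⟩ => ⟨j.rev, h⟩, fun ⟨p, h⟩ => ⟨p.rev, by simpa [dual] using h⟩⟩

lemma colNonzero_dual_iff (M : Mat m) (j : Fin m) : colNonzero (dual M) j ↔ rowNonzero M j.rev :=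
  ⟨fun ⟨i, h⟩ => ⟨i.rev, h⟩, fun ⟨q, h⟩ => ⟨q.rev, by simpa [dual] using h⟩⟩

def CMset₂ (n k : ℕ) : Set SMat :=
  {A | UT A.2 ∧ (∀ j, colNonzero A.2 j) ∧ msize A.2 = n ∧ firstRowSum A.2 = k}

theorem ncard_CMset₂ : (CMset₂ n k).ncard = (RMset₂ n k).ncard := by
  let δ : SMat → SMat := fun A => ⟨A.1, dual A.2⟩
  have hδ : Function.Involutive δ := fun A => congrArg (Sigma.mk A.1) (dual_dual A.2)
  refine Set.BijOn.ncard_eq (f := δ)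
    (Set.InvOn.bijOn (f' := δ) ⟨fun A _ => hδ A, fun A _ => hδ A⟩ ?_ ?_)
  · rintro A ⟨hut, hcol, hsize, hfirst⟩
    exact ⟨⟨ut_dual hut, fun i => (rowNonzero_dual_iff _ i).2 (hcol _),
      (msize_dual _).trans hsize⟩, (lastColSum_dual _).trans hfirst⟩
  · rintro A ⟨⟨hut, hrow, hsize⟩, hlast⟩
    exact ⟨ut_dual hut, fun j => (colNonzero_dual_iff _ j).2 (hrow _), (msize_dual _).trans hsize,
      (firstRowSum_dual _).trans hlast⟩

/-! ### Merging -/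

section Shift

variable (S : ℕ → Prop)

def shift (i : ℕ) : ℕ := i + Nat.count S i

lemma shift_succ (i : ℕ) : shift S (i + 1) = shift S i + 1 + if S i then 1 else 0 := by
  simp only [shift, Nat.count_succ]
  omega

lemma shift_strictMono : StrictMono (shift S) :=
  strictMono_nat_of_lt_succ fun i => by rw [shift_succ]; omega

variable {S}

lemma shift_succ_of_mem {c : ℕ} (hc : S c) : shift S (c + 1) = shift S c + 2 := by
  rw [shift_succ, if_pos hc]

lemma shift_succ_of_not_mem {c : ℕ} (hc : ¬ S c) : shift S (c + 1) = shift S c + 1 := by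
  rw [shift_succ, if_neg hc, add_zero]

lemma shift_ne_shift_add_one {c : ℕ} (hc : S c) (i : ℕ) : shift S i ≠ shift S c + 1 := by
  intro h
  rcases lt_or_ge c i with hci | hic
  · have := (shift_strictMono S).monotone (Nat.succ_le_of_lt hci)
    rw [shift_succ_of_mem hc] at this
    omega
  · have := (shift_strictMono S).monotone hic
    omega

lemma exists_shift_or (q : ℕ) : (∃ i, shift S i = q) ∨ ∃ c, S c ∧ shift S c + 1 = q := by
  induction q with
  | zero => exact Or.inl ⟨0, rfl⟩
  | succ q ih =>
    rcases ih with ⟨i, rfl⟩ | ⟨c, hc, rfl⟩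
    · by_cases hi : S i
      · exact Or.inr ⟨i, hi, rfl⟩
      · exact Or.inl ⟨i + 1, shift_succ_of_not_mem hi⟩
    · exact Or.inl ⟨c + 1, shift_succ_of_mem hc⟩

variable (S)

lemma sum_range_shift (f : ℕ → ℕ) (m : ℕ) :
    ∑ q ∈ range (shift S m), f q =
      ∑ i ∈ range m, (f (shift S i) + if S i then f (shift S i + 1) else 0) := by
  induction m with
  | zero => rfl
  | succ m ih =>
    rw [sum_range_succ, ← ih, shift_succ]
    split_ifs <;> simp [sum_range_succ, add_assoc]

end Shift

/-- The top half of an even self-dual matrix of dimension `2 * dim`: `nw` is its NW quadrant,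
and `ne p c` is the entry in column `2 * dim - 1 - c`, so that the cells of the NE quadrant on or
above the antidiagonal form an upper-triangular grid. -/
@[ext] structure Folded where
  dim : ℕ
  nw : Grid
  ne : Grid

def Folded.HasNonzeroLines (P : Folded) : Prop :=
  ∀ i < P.dim, RowNonzero P.nw i ∨ RowNonzero P.ne i ∨ ColNonzero P.ne i

def foldedSet (n k : ℕ) : Set Folded :=
  {P | IsUpper P.dim P.nw ∧ IsUpper P.dim P.ne ∧ (∀ j < P.dim, ColNonzero P.nw j) ∧
    P.HasNonzeroLines ∧ total P.dim P.nw + total P.dim P.ne = n ∧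
    rowSum P.dim P.nw 0 + rowSum P.dim P.ne 0 = k}

namespace Folded

variable (P : Folded)

def pos : ℕ → ℕ := shift (ColNonzero P.ne)

/-- Insert a new index right after every index `c` whose `ne`-column is nonzero: old indices
carry `nw`, the new column after `c` carries the `ne`-column `c`, and new rows are zero. -/
def merge : Grid := fun p q =>
  if p ∈ Set.range P.pos then
    if q ∈ Set.range P.pos then P.nw (P.pos.invFun p) (P.pos.invFun q)
    else P.ne (P.pos.invFun p) (P.pos.invFun (q - 1))
  else 0

lemma pos_strictMono : StrictMono P.pos := shift_strictMono _

lemma pos_succ_of_colNonzero {c : ℕ} (hc : ColNonzero P.ne c) : P.pos (c + 1) = P.pos c + 2 :=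
  shift_succ_of_mem hc

lemma invFun_pos (i : ℕ) : P.pos.invFun (P.pos i) = i :=
  Function.leftInverse_invFun (shift_strictMono _).injective i

lemma merge_pos_pos (i j : ℕ) : P.merge (P.pos i) (P.pos j) = P.nw i j := by
  simp only [merge, Set.mem_range_self, if_true, invFun_pos]

lemma merge_pos_new (i : ℕ) {c : ℕ} (hc : ColNonzero P.ne c) :
    P.merge (P.pos i) (P.pos c + 1) = P.ne i c := by
  have hq : P.pos c + 1 ∉ Set.range P.pos := fun ⟨j, hj⟩ => shift_ne_shift_add_one hc j hj
  simp only [merge, Set.mem_range_self, if_true, if_neg hq, Nat.add_sub_cancel, invFun_pos]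

lemma merge_new_row {c : ℕ} (hc : ColNonzero P.ne c) (q : ℕ) : P.merge (P.pos c + 1) q = 0 :=
  if_neg fun ⟨j, hj⟩ => shift_ne_shift_add_one hc j hj

lemma pos_or_new (q : ℕ) :
    (∃ i, P.pos i = q) ∨ ∃ c, ColNonzero P.ne c ∧ P.pos c + 1 = q :=
  exists_shift_or q

lemma ne_eq_zero_of_not_colNonzero {c : ℕ} (hc : ¬ ColNonzero P.ne c) (i : ℕ) : P.ne i c = 0 :=
  not_not.mp fun h => hc ⟨i, h⟩

lemma merge_ne_zero {p q : ℕ} (h : P.merge p q ≠ 0) :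
    ∃ i, P.pos i = p ∧ ((∃ j, P.pos j = q ∧ P.nw i j ≠ 0) ∨
      ∃ c, ColNonzero P.ne c ∧ P.pos c + 1 = q ∧ P.ne i c ≠ 0) := by
  rcases P.pos_or_new p with ⟨i, rfl⟩ | ⟨c, hc, rfl⟩
  · refine ⟨i, rfl, ?_⟩
    rcases P.pos_or_new q with ⟨j, rfl⟩ | ⟨c, hc, rfl⟩
    · exact Or.inl ⟨j, rfl, P.merge_pos_pos i j ▸ h⟩
    · exact Or.inr ⟨c, hc, rfl, P.merge_pos_new i hc ▸ h⟩
  · exact absurd (P.merge_new_row hc q) h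

def mergedDim : ℕ := P.pos P.dim

variable {P}

lemma isUpper_merge (hnw : IsUpper P.dim P.nw) (hne : IsUpper P.dim P.ne) :
    IsUpper P.mergedDim P.merge := by
  intro p q h
  have hmono := P.pos_strictMono
  obtain ⟨i, rfl, ⟨j, rfl, hij⟩ | ⟨c, hc, rfl, hic⟩⟩ := P.merge_ne_zero h
  · obtain ⟨hle, hlt⟩ := hnw i j hij
    exact ⟨hmono.monotone hle, hmono hlt⟩
  · obtain ⟨hle, hlt⟩ := hne i c hic
    have := hmono.monotone (show c + 1 ≤ P.dim by omega)
    have := hmono.monotone hle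
    have := P.pos_succ_of_colNonzero hc
    exact ⟨by omega, by unfold mergedDim; omega⟩

end Folded

lemma ofGrid_mem_CMset₂_iff (h : IsUpper d G) :
    ofGrid d G ∈ CMset₂ n k ↔
      (∀ q < d, ColNonzero G q) ∧ total d G = n ∧ rowSum d G 0 = k := by
  simp only [CMset₂, ofGrid, Set.mem_ofPred_eq, msize_gridMat, firstRowSum_gridMat,
    colNonzero_gridMat_iff h, Fin.forall_iff, and_iff_right (ut_gridMat h)]

namespace Folded

variable (P : Folded)

lemma rowSum_merge_pos (i : ℕ) :
    rowSum P.mergedDim P.merge (P.pos i) = rowSum P.dim P.nw i + rowSum P.dim P.ne i := by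
  rw [rowSum, mergedDim, pos, sum_range_shift, rowSum, rowSum, ← sum_add_distrib]
  refine sum_congr rfl fun j _ => ?_
  rw [← pos, merge_pos_pos]
  split_ifs with hj
  · rw [merge_pos_new _ _ hj]
  · rw [ne_eq_zero_of_not_colNonzero _ hj]

lemma total_merge : total P.mergedDim P.merge = total P.dim P.nw + total P.dim P.ne := by
  rw [total, mergedDim, pos, sum_range_shift, total, total, ← sum_add_distrib]
  refine sum_congr rfl fun i _ => ?_
  rw [← pos, ← mergedDim, rowSum_merge_pos]
  split_ifs with hi
  · simp [rowSum, merge_new_row _ hi]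
  · rfl

lemma rowSum_merge_zero :
    rowSum P.mergedDim P.merge 0 = rowSum P.dim P.nw 0 + rowSum P.dim P.ne 0 :=
  P.rowSum_merge_pos 0

variable {P}

lemma colNonzero_merge (hcol : ∀ j < P.dim, ColNonzero P.nw j) {q : ℕ} (hq : q < P.mergedDim) :
    ColNonzero P.merge q := by
  rcases P.pos_or_new q with ⟨j, rfl⟩ | ⟨c, ⟨r, hr⟩, rfl⟩
  · obtain ⟨i, hi⟩ := hcol j (P.pos_strictMono.lt_iff_lt.mp hq)
    exact ⟨P.pos i, by rwa [merge_pos_pos]⟩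
  · exact ⟨P.pos r, by rwa [merge_pos_new _ _ ⟨r, hr⟩]⟩

lemma merge_mem (hP : P ∈ foldedSet n k) :
    (P.mergedDim, P.merge) ∈ gridsOf (CMset₂ n k) := by
  obtain ⟨hnw, hne, hcol, -, hsize, hfirst⟩ := hP
  have hup := isUpper_merge hnw hne
  exact ⟨hup, (ofGrid_mem_CMset₂_iff hup).2 ⟨fun q hq => colNonzero_merge hcol hq,
    P.total_merge.trans hsize, P.rowSum_merge_zero.trans hfirst⟩⟩

end Folded

/-! ### Splitting -/

section Split

variable {p : ℕ}

/-- The inserted rows of a merged grid.  A maximal run of zero rows of a merged grid alternates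
between old and new rows and ends with a new one (the row after an old zero row `i` is the row
inserted after `i`), so whether a zero row is new is decided from the end of its run. -/
def IsNew (d : ℕ) (C : Grid) (p : ℕ) : Prop :=
  if p < d then (∀ q, C p q = 0) ∧ ¬ IsNew d C (p + 1) else False
termination_by d - p

lemma isNew_iff : IsNew d C p ↔ p < d ∧ (∀ q, C p q = 0) ∧ ¬ IsNew d C (p + 1) := by
  rw [IsNew]
  split_ifs with h <;> simp [h]

lemma IsNew.lt (h : IsNew d C p) : p < d := (isNew_iff.1 h).1

lemma IsNew.row_eq_zero (h : IsNew d C p) (q : ℕ) : C p q = 0 := (isNew_iff.1 h).2.1 q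

lemma IsNew.not_succ (h : IsNew d C p) : ¬ IsNew d C (p + 1) := (isNew_iff.1 h).2.2

def oldPos (d : ℕ) (C : Grid) : ℕ → ℕ
  | 0 => 0
  | i + 1 => oldPos d C i + 1 + if IsNew d C (oldPos d C i + 1) then 1 else 0

lemma oldPos_eq_shift : oldPos d C = shift fun c => IsNew d C (oldPos d C c + 1) := by
  funext i
  induction i with
  | zero => rfl
  | succ i ih => rw [oldPos, shift_succ, ← ih]

lemma oldPos_strictMono : StrictMono (oldPos d C) := oldPos_eq_shift ▸ shift_strictMono _

lemma oldPos_or_new (p : ℕ) :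
    (∃ i, oldPos d C i = p) ∨ ∃ c, IsNew d C (oldPos d C c + 1) ∧ oldPos d C c + 1 = p := by
  have := exists_shift_or (S := fun c => IsNew d C (oldPos d C c + 1)) p
  rwa [← oldPos_eq_shift] at this

lemma exists_oldPos_of_not_isNew (h : ¬ IsNew d C p) : ∃ i, oldPos d C i = p :=
  (oldPos_or_new p).resolve_right fun ⟨_, hc, hp⟩ => h (hp ▸ hc)

lemma exists_le_oldPos : ∃ i, d ≤ oldPos d C i := ⟨d, oldPos_strictMono.id_le d⟩

def split (d : ℕ) (C : Grid) : Folded where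
  dim := Nat.find (exists_le_oldPos (d := d) (C := C))
  nw i j := C (oldPos d C i) (oldPos d C j)
  ne i c := if IsNew d C (oldPos d C c + 1) then C (oldPos d C i) (oldPos d C c + 1) else 0

lemma split_nw (i j : ℕ) : (split d C).nw i j = C (oldPos d C i) (oldPos d C j) := rfl

lemma split_ne (i c : ℕ) : (split d C).ne i c =
    if IsNew d C (oldPos d C c + 1) then C (oldPos d C i) (oldPos d C c + 1) else 0 := rfl

lemma oldPos_succ_le {i : ℕ} (h : oldPos d C i < d) : oldPos d C (i + 1) ≤ d := by
  rw [oldPos]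
  split_ifs with hn
  · have := hn.lt
    omega
  · omega

lemma oldPos_split_dim : oldPos d C (split d C).dim = d := by
  refine le_antisymm ?_ (Nat.find_spec exists_le_oldPos)
  change oldPos d C (Nat.find _) ≤ d
  cases h : Nat.find (exists_le_oldPos (d := d) (C := C)) with
  | zero => exact Nat.zero_le d
  | succ m =>
    have hm : m < Nat.find (exists_le_oldPos (d := d) (C := C)) := by omega
    exact oldPos_succ_le (not_le.mp (Nat.find_min exists_le_oldPos hm))

lemma lt_split_dim_iff {i : ℕ} : i < (split d C).dim ↔ oldPos d C i < d :=
  oldPos_strictMono.lt_iff_lt.symm.trans (by rw [oldPos_split_dim])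

lemma not_isNew_zero (hC : IsUpper d C) (hcol : ∀ q < d, ColNonzero C q) :
    ¬ IsNew d C 0 := fun h => by
  obtain ⟨p, hp⟩ := hcol 0 h.lt
  obtain rfl : p = 0 := Nat.le_zero.mp (hC p 0 hp).1
  exact hp (h.row_eq_zero 0)

lemma not_isNew_oldPos (hC : IsUpper d C) (hcol : ∀ q < d, ColNonzero C q) (i : ℕ) :
    ¬ IsNew d C (oldPos d C i) := by
  induction i with
  | zero => exact not_isNew_zero hC hcol
  | succ i _ =>
    rw [oldPos]
    split_ifs with h
    · exact h.not_succ
    · simp only [add_zero]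
      exact h

lemma colNonzero_split_ne_iff (hcol : ∀ q < d, ColNonzero C q) (c : ℕ) :
    ColNonzero (split d C).ne c ↔ IsNew d C (oldPos d C c + 1) := by
  constructor
  · rintro ⟨r, hr⟩
    by_contra h
    exact hr (if_neg h)
  · intro h
    obtain ⟨p, hp⟩ := hcol _ h.lt
    obtain ⟨r, rfl⟩ := exists_oldPos_of_not_isNew (d := d) fun hp' => hp (hp'.row_eq_zero _)
    exact ⟨r, by simpa [split, h] using hp⟩

lemma split_pos (hcol : ∀ q < d, ColNonzero C q) : (split d C).pos = oldPos d C := by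
  rw [Folded.pos, funext fun c => propext (colNonzero_split_ne_iff hcol c), ← oldPos_eq_shift]

end Split

lemma mergedDim_split (hcol : ∀ q < d, ColNonzero C q) : (split d C).mergedDim = d := by
  rw [Folded.mergedDim, split_pos hcol, oldPos_split_dim]

lemma merge_split (hcol : ∀ q < d, ColNonzero C q) : (split d C).merge = C := by
  have hpos := split_pos hcol
  funext p q
  rcases oldPos_or_new (d := d) (C := C) p with ⟨i, rfl⟩ | ⟨c, hc, rfl⟩
  · rcases oldPos_or_new (d := d) (C := C) q with ⟨j, rfl⟩ | ⟨c, hc, rfl⟩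
    · have h := (split d C).merge_pos_pos i j
      rwa [hpos] at h
    · have h := (split d C).merge_pos_new i ((colNonzero_split_ne_iff hcol c).2 hc)
      rw [hpos] at h
      rw [h, split_ne, if_pos hc]
  · have h := (split d C).merge_new_row ((colNonzero_split_ne_iff hcol c).2 hc) q
    rw [hpos] at h
    rw [h, hc.row_eq_zero q]

lemma isUpper_split_nw (hC : IsUpper d C) : IsUpper (split d C).dim (split d C).nw := by
  intro i j h
  obtain ⟨hle, hlt⟩ := hC _ _ h
  exact ⟨(oldPos_strictMono (d := d) (C := C)).le_iff_le.mp hle, lt_split_dim_iff.2 hlt⟩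

lemma isUpper_split_ne (hC : IsUpper d C) (hcol : ∀ q < d, ColNonzero C q) :
    IsUpper (split d C).dim (split d C).ne := by
  intro i c h
  have hc : IsNew d C (oldPos d C c + 1) := by
    by_contra hc
    exact h (if_neg hc)
  rw [split_ne, if_pos hc] at h
  have hle := (hC _ _ h).1
  have hne : oldPos d C i ≠ oldPos d C c + 1 := fun he => not_isNew_oldPos hC hcol i (he ▸ hc)
  have := hc.lt
  exact ⟨(oldPos_strictMono (d := d) (C := C)).le_iff_le.mp (by omega),
    lt_split_dim_iff.2 (by omega)⟩

lemma hasNonzeroLines_split (hC : IsUpper d C) (hcol : ∀ q < d, ColNonzero C q) :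
    (split d C).HasNonzeroLines := by
  intro i hi
  by_cases hrow : RowNonzero C (oldPos d C i)
  · obtain ⟨q, hq⟩ := hrow
    rcases oldPos_or_new (d := d) (C := C) q with ⟨j, rfl⟩ | ⟨c, hc, rfl⟩
    · exact Or.inl ⟨j, hq⟩
    · exact Or.inr (Or.inl ⟨c, by rwa [split_ne, if_pos hc]⟩)
  · refine Or.inr (Or.inr ((colNonzero_split_ne_iff hcol i).2 ?_))
    by_contra h
    refine not_isNew_oldPos hC hcol i (isNew_iff.2 ⟨lt_split_dim_iff.1 hi, fun q => ?_, h⟩)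
    exact not_not.mp fun hq => hrow ⟨q, hq⟩

lemma split_mem (hQ : (d, C) ∈ gridsOf (CMset₂ n k)) : split d C ∈ foldedSet n k := by
  obtain ⟨hC, hQ⟩ := hQ
  obtain ⟨hcol, hsize, hfirst⟩ := (ofGrid_mem_CMset₂_iff hC).1 hQ
  refine ⟨isUpper_split_nw hC, isUpper_split_ne hC hcol, fun j hj => ?_,
    hasNonzeroLines_split hC hcol, ?_, ?_⟩
  · obtain ⟨p, hp⟩ := hcol _ (lt_split_dim_iff.1 hj)
    obtain ⟨r, rfl⟩ := exists_oldPos_of_not_isNew (d := d) fun hp' => hp (hp'.row_eq_zero _)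
    exact ⟨r, hp⟩
  · rw [← Folded.total_merge, mergedDim_split hcol, merge_split hcol, hsize]
  · rw [← Folded.rowSum_merge_zero, mergedDim_split hcol, merge_split hcol, hfirst]

namespace Folded

variable {P : Folded}

lemma isNew_merge_iff (hne : IsUpper P.dim P.ne) (hrow : P.HasNonzeroLines) (p : ℕ) :
    IsNew P.mergedDim P.merge p ↔ ∃ c, ColNonzero P.ne c ∧ P.pos c + 1 = p := by
  rw [isNew_iff]
  rcases P.pos_or_new p with ⟨i, rfl⟩ | ⟨c, hc, rfl⟩
  · refine iff_of_false ?_ fun ⟨c, hc, h⟩ => shift_ne_shift_add_one hc i h.symm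
    rintro ⟨hlt, hzero, hnext⟩
    have hcol : ColNonzero P.ne i := by
      refine ((hrow i (P.pos_strictMono.lt_iff_lt.mp hlt)).resolve_left ?_).resolve_left ?_
      · rintro ⟨j, hj⟩
        exact hj (P.merge_pos_pos i j ▸ hzero _)
      · rintro ⟨c, hc⟩
        exact hc (P.merge_pos_new i ⟨i, hc⟩ ▸ hzero _)
    exact hnext ((isNew_merge_iff hne hrow (P.pos i + 1)).2 ⟨i, hcol, rfl⟩)
  · have hlt : P.pos c + 1 < P.mergedDim := by
      obtain ⟨r, hr⟩ := id hc
      have := P.pos_strictMono.monotone (show c + 1 ≤ P.dim from (hne r c hr).2)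
      have := P.pos_succ_of_colNonzero hc
      unfold mergedDim
      omega
    refine iff_of_true ⟨hlt, P.merge_new_row hc, fun hnext => ?_⟩ ⟨c, hc, rfl⟩
    obtain ⟨c', hc', h⟩ := (isNew_merge_iff hne hrow (P.pos c + 1 + 1)).1 hnext
    refine shift_ne_shift_add_one hc' (c + 1) (show P.pos (c + 1) = P.pos c' + 1 from ?_)
    rw [P.pos_succ_of_colNonzero hc]
    omega
termination_by P.mergedDim - p

lemma isNew_merge_pos_add_one_iff (hne : IsUpper P.dim P.ne) (hrow : P.HasNonzeroLines) (i : ℕ) :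
    IsNew P.mergedDim P.merge (P.pos i + 1) ↔ ColNonzero P.ne i := by
  rw [isNew_merge_iff hne hrow]
  exact ⟨fun ⟨c, hc, h⟩ => P.pos_strictMono.injective (Nat.add_right_cancel h) ▸ hc,
    fun h => ⟨i, h, rfl⟩⟩

lemma oldPos_merge (hne : IsUpper P.dim P.ne) (hrow : P.HasNonzeroLines) :
    oldPos P.mergedDim P.merge = P.pos := by
  funext i
  induction i with
  | zero => rfl
  | succ i ih =>
    rw [oldPos, ih, pos, shift_succ, ← pos]
    simp only [isNew_merge_pos_add_one_iff hne hrow]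

lemma split_merge (hne : IsUpper P.dim P.ne) (hrow : P.HasNonzeroLines) :
    split P.mergedDim P.merge = P := by
  have hold := oldPos_merge hne hrow
  ext i c
  · change Nat.find _ = _
    rw [Nat.find_eq_iff, hold]
    exact ⟨le_rfl, fun m hm => not_le.mpr (P.pos_strictMono hm)⟩
  · rw [split_nw, hold, merge_pos_pos]
  · rw [split_ne, hold, isNew_merge_pos_add_one_iff hne hrow]
    split_ifs with hc
    · exact P.merge_pos_new i hc
    · exact (P.ne_eq_zero_of_not_colNonzero hc i).symm

end Folded

theorem ncard_foldedSet :
    (foldedSet n k).ncard = (gridsOf (CMset₂ n k)).ncard := by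
  refine Set.BijOn.ncard_eq (f := fun P => (P.mergedDim, P.merge)) (Set.InvOn.bijOn
    (f' := fun Q => split Q.1 Q.2) ⟨fun P hP => ?_, fun Q hQ => ?_⟩ (fun P => Folded.merge_mem)
    (fun Q hQ => split_mem hQ))
  · exact Folded.split_merge hP.2.1 hP.2.2.2.1
  · have hcol := ((ofGrid_mem_CMset₂_iff hQ.1).1 hQ.2).1
    exact Prod.ext (mergedDim_split hcol) (merge_split hcol)

/-! ### Folding -/

lemma ofGrid_mem_EMset_iff (h : IsUpper d G) :
    ofGrid d G ∈ EMset n k ↔ (∀ p < d, RowNonzero G p) ∧ (∀ q < d, ColNonzero G q) ∧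
      (∀ p < d, ∀ q < d, G p q = G (d - 1 - q) (d - 1 - p)) ∧ reducedTotal d G = n ∧
      rowSum d G 0 = k ∧ Even d := by
  simp only [EMset, Mset₂, Mset, IsFishburn, ofGrid, Set.mem_ofPred_eq, rowNonzero_gridMat_iff h,
    colNonzero_gridMat_iff h, Fin.forall_iff, selfDual_gridMat_iff, reducedSize_gridMat,
    firstRowSum_gridMat, and_iff_right (ut_gridMat h), and_assoc]

lemma IsUpper.rowSum_eq_zero (h : IsUpper m G) {p : ℕ} (hp : m ≤ p) (d : ℕ) :
    rowSum d G p = 0 :=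
  sum_eq_zero fun q _ => h.eq_zero (by omega)

lemma IsUpper.sum_rowSum_eq_total (h : IsUpper m G) (hm : m ≤ d) :
    ∑ p ∈ range d, rowSum m G p = total m G :=
  (sum_subset (range_subset_range.2 hm) fun p _ hp => h.rowSum_eq_zero (by simpa using hp) m).symm

lemma sum_range_two_mul (f : ℕ → ℕ) (m : ℕ) :
    ∑ q ∈ range (2 * m), f q =
      ∑ q ∈ range m, f q + ∑ c ∈ range m, f (2 * m - 1 - c) := by
  rw [two_mul, sum_range_add, ← sum_range_reflect (fun x => f (m + x))]
  congr 1
  exact sum_congr rfl fun c hc => by rw [mem_range] at hc; congr 1; omega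

def foldGrid (m : ℕ) (G : Grid) : Folded where
  dim := m
  nw p q := if q < m then G p q else 0
  ne p c := if p ≤ c ∧ c < m then G p (2 * m - 1 - c) else 0

namespace Folded

variable (P : Folded)

/-- The entries of the unfolded matrix in the NW and diagonal cells. -/
def half : Grid := fun p q => if q < P.dim then P.nw p q else P.ne p (2 * P.dim - 1 - q)

def unfold : Grid := fun p q =>
  if p < 2 * P.dim ∧ q < 2 * P.dim then
    if p + q + 1 ≤ 2 * P.dim then P.half p q else P.half (2 * P.dim - 1 - q) (2 * P.dim - 1 - p)
  else 0

lemma unfold_of_le {p q : ℕ} (h : p + q + 1 ≤ 2 * P.dim) : P.unfold p q = P.half p q := by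
  rw [unfold, if_pos (by omega), if_pos h]

lemma unfold_symm {p q : ℕ} (hp : p < 2 * P.dim) (hq : q < 2 * P.dim) :
    P.unfold p q = P.unfold (2 * P.dim - 1 - q) (2 * P.dim - 1 - p) := by
  unfold unfold
  split_ifs <;> first | omega | rfl | (congr 1 <;> omega)

lemma unfold_nw {p q : ℕ} (hpq : p ≤ q) (hq : q < P.dim) : P.unfold p q = P.nw p q := by
  rw [unfold_of_le _ (by omega), half, if_pos hq]

lemma unfold_ne {p c : ℕ} (hpc : p ≤ c) (hc : c < P.dim) :
    P.unfold p (2 * P.dim - 1 - c) = P.ne p c := by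
  rw [unfold_of_le _ (by omega), half, if_neg (by omega)]
  congr 1
  omega

variable {P}

lemma isUpper_unfold (hnw : IsUpper P.dim P.nw) (hne : IsUpper P.dim P.ne) :
    IsUpper (2 * P.dim) P.unfold := by
  have hhalf : ∀ p q, P.half p q ≠ 0 → p ≤ q := fun p q h => by
    unfold half at h
    split_ifs at h with hq
    · exact (hnw p q h).1
    · have := hne _ _ h
      omega
  intro p q h
  unfold unfold at h
  split_ifs at h with hpq hle
  · exact ⟨hhalf p q h, hpq.2⟩
  · exact ⟨by have := hhalf _ _ h; omega, hpq.2⟩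
  · exact absurd rfl h

end Folded

lemma isUpper_foldGrid_nw (hG : IsUpper (2 * m) G) : IsUpper m (foldGrid m G).nw := by
  intro p q h
  simp only [foldGrid] at h
  split_ifs at h with hq
  · exact ⟨(hG p q h).1, hq⟩
  · exact absurd rfl h

lemma isUpper_foldGrid_ne : IsUpper m (foldGrid m G).ne := by
  intro p c h
  simp only [foldGrid] at h
  split_ifs at h with hpc
  · exact hpc
  · exact absurd rfl h

lemma half_foldGrid {p q : ℕ} (h : p + q + 1 ≤ 2 * m) :
    (foldGrid m G).half p q = G p q := by
  simp only [Folded.half, foldGrid]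
  split_ifs <;> first | rfl | omega | (congr 1; omega)

lemma sum_row_eq_rowSum_foldGrid (hG : IsUpper (2 * m) G) (p : ℕ) :
    ∑ q ∈ range (2 * m), (if p + q + 1 ≤ 2 * m then G p q else 0) =
      rowSum m (foldGrid m G).nw p + rowSum m (foldGrid m G).ne p := by
  rw [sum_range_two_mul, rowSum, rowSum]
  congr 1 <;> refine sum_congr rfl fun q hq => ?_ <;> rw [mem_range] at hq <;>
    simp only [foldGrid]
  · split_ifs with h
    · rfl
    · exact (hG.eq_zero (by omega)).symm
  · split_ifs with h1 h2 h2 <;> first | rfl | omega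

lemma reducedTotal_eq_total_foldGrid (hG : IsUpper (2 * m) G) :
    reducedTotal (2 * m) G = total m (foldGrid m G).nw + total m (foldGrid m G).ne := by
  rw [reducedTotal, sum_congr rfl fun p _ => sum_row_eq_rowSum_foldGrid hG p, sum_add_distrib,
    (isUpper_foldGrid_nw hG).sum_rowSum_eq_total (by omega),
    isUpper_foldGrid_ne.sum_rowSum_eq_total (by omega)]

lemma rowSum_zero_eq_rowSum_foldGrid (hG : IsUpper (2 * m) G) :
    rowSum (2 * m) G 0 = rowSum m (foldGrid m G).nw 0 + rowSum m (foldGrid m G).ne 0 := by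
  rw [← sum_row_eq_rowSum_foldGrid hG, rowSum]
  exact sum_congr rfl fun q hq => (if_pos (by rw [mem_range] at hq; omega)).symm

lemma unfold_foldGrid (hG : IsUpper (2 * m) G)
    (hsd : ∀ p < 2 * m, ∀ q < 2 * m, G p q = G (2 * m - 1 - q) (2 * m - 1 - p)) :
    (foldGrid m G).unfold = G := by
  funext p q
  simp only [Folded.unfold, show (foldGrid m G).dim = m from rfl]
  split_ifs with hpq hle
  · exact half_foldGrid hle
  · rw [half_foldGrid (by omega), ← hsd p hpq.1 q hpq.2]
  · exact (hG.eq_zero (by omega)).symm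

namespace Folded

variable {P : Folded}

lemma foldGrid_unfold (hnw : IsUpper P.dim P.nw) (hne : IsUpper P.dim P.ne) :
    foldGrid P.dim P.unfold = P := by
  have hU := isUpper_unfold hnw hne
  ext p q
  · rfl
  · simp only [foldGrid]
    split_ifs with hq
    · by_cases hpq : p ≤ q
      · exact P.unfold_nw hpq hq
      · rw [hU.eq_zero (by omega), hnw.eq_zero (by omega)]
    · exact (hnw.eq_zero (by omega)).symm
  · simp only [foldGrid]
    split_ifs with hpq
    · exact P.unfold_ne hpq.1 hpq.2
    · exact (hne.eq_zero hpq).symm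

end Folded

lemma foldGrid_mem (hG : IsUpper (2 * m) G) (hrow : ∀ p < 2 * m, RowNonzero G p)
    (hcol : ∀ q < 2 * m, ColNonzero G q)
    (hsd : ∀ p < 2 * m, ∀ q < 2 * m, G p q = G (2 * m - 1 - q) (2 * m - 1 - p))
    (hred : reducedTotal (2 * m) G = n) (hfirst : rowSum (2 * m) G 0 = k) :
    foldGrid m G ∈ foldedSet n k := by
  refine ⟨isUpper_foldGrid_nw hG, isUpper_foldGrid_ne, fun j (hj : j < m) => ?_,
    fun i (hi : i < m) => ?_, (reducedTotal_eq_total_foldGrid hG).symm.trans hred,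
    (rowSum_zero_eq_rowSum_foldGrid hG).symm.trans hfirst⟩
  · obtain ⟨p, hp⟩ := hcol j (by omega)
    exact ⟨p, show (if j < m then G p j else 0) ≠ 0 by rwa [if_pos hj]⟩
  · obtain ⟨q, hq⟩ := hrow i (by omega)
    have hiq := hG i q hq
    by_cases hqm : q < m
    · exact Or.inl ⟨q, show (if q < m then G i q else 0) ≠ 0 by rwa [if_pos hqm]⟩
    by_cases hic : i ≤ 2 * m - 1 - q
    · refine Or.inr (Or.inl ⟨2 * m - 1 - q, ?_⟩)
      change (if i ≤ 2 * m - 1 - q ∧ 2 * m - 1 - q < m then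
        G i (2 * m - 1 - (2 * m - 1 - q)) else 0) ≠ 0
      rwa [if_pos ⟨hic, by omega⟩, show 2 * m - 1 - (2 * m - 1 - q) = q by omega]
    · refine Or.inr (Or.inr ⟨2 * m - 1 - q, ?_⟩)
      change (if 2 * m - 1 - q ≤ i ∧ i < m then G (2 * m - 1 - q) (2 * m - 1 - i) else 0) ≠ 0
      rwa [if_pos ⟨by omega, hi⟩, ← hsd i (by omega) q hiq.2]

namespace Folded

variable {P : Folded}

lemma rowNonzero_unfold (hnw : IsUpper P.dim P.nw) (hne : IsUpper P.dim P.ne)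
    (hcol : ∀ j < P.dim, ColNonzero P.nw j) (hrow : P.HasNonzeroLines) {i : ℕ}
    (hi : i < 2 * P.dim) : RowNonzero P.unfold i := by
  have hreflect : ∀ r ≤ 2 * P.dim - 1 - i, P.unfold i (2 * P.dim - 1 - r) =
      P.unfold r (2 * P.dim - 1 - i) := fun r _ => by
    rw [P.unfold_symm hi (by omega), show 2 * P.dim - 1 - (2 * P.dim - 1 - r) = r by omega]
  by_cases him : i < P.dim
  · rcases hrow i him with ⟨q, hq⟩ | ⟨c, hc⟩ | ⟨r, hr⟩
    · have := hnw i q hq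
      exact ⟨q, by rwa [P.unfold_nw this.1 this.2]⟩
    · have := hne i c hc
      exact ⟨2 * P.dim - 1 - c, by rwa [P.unfold_ne this.1 this.2]⟩
    · have := hne r i hr
      exact ⟨2 * P.dim - 1 - r, by rwa [hreflect r (by omega), P.unfold_ne this.1 this.2]⟩
  · obtain ⟨r, hr⟩ := hcol (2 * P.dim - 1 - i) (by omega)
    have := hnw r _ hr
    exact ⟨2 * P.dim - 1 - r, by rwa [hreflect r this.1, P.unfold_nw this.1 this.2]⟩

lemma unfold_mem (hP : P ∈ foldedSet n k) : (2 * P.dim, P.unfold) ∈ gridsOf (EMset n k) := by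
  obtain ⟨hnw, hne, hcol, hrow, hsize, hfirst⟩ := hP
  have hU := isUpper_unfold hnw hne
  have hrowU := fun i (hi : i < 2 * P.dim) => rowNonzero_unfold hnw hne hcol hrow hi
  refine ⟨hU, (ofGrid_mem_EMset_iff hU).2 ⟨hrowU, fun j hj => ?_,
    fun p hp q hq => P.unfold_symm hp hq, ?_, ?_, even_two_mul _⟩⟩
  · obtain ⟨q, hq⟩ := hrowU (2 * P.dim - 1 - j) (by omega)
    have := hU _ _ hq
    refine ⟨2 * P.dim - 1 - q, ?_⟩
    rwa [P.unfold_symm (by omega) hj, show 2 * P.dim - 1 - (2 * P.dim - 1 - q) = q by omega]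
  · rwa [reducedTotal_eq_total_foldGrid hU, foldGrid_unfold hnw hne]
  · rwa [rowSum_zero_eq_rowSum_foldGrid hU, foldGrid_unfold hnw hne]

end Folded

theorem ncard_EMset : (EMset n k).ncard = (foldedSet n k).ncard := by
  rw [ncard_eq_ncard_gridsOf _ fun A hA => hA.1.1.1.1]
  refine Set.BijOn.ncard_eq (f := fun Q => foldGrid (Q.1 / 2) Q.2) (Set.InvOn.bijOn
    (f' := fun P => (2 * P.dim, P.unfold)) ⟨?_, fun P hP => ?_⟩ ?_ fun P => Folded.unfold_mem)
  · rintro ⟨d, G⟩ ⟨hG, hEM⟩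
    obtain ⟨-, -, hsd, -, -, heven⟩ := (ofGrid_mem_EMset_iff hG).1 hEM
    obtain ⟨m, rfl⟩ : ∃ m, d = 2 * m := ⟨d / 2, (Nat.two_mul_div_two_of_even heven).symm⟩
    simp only [Nat.mul_div_cancel_left m two_pos]
    exact Prod.ext rfl (unfold_foldGrid hG hsd)
  · simp only [Nat.mul_div_cancel_left _ two_pos]
    exact Folded.foldGrid_unfold hP.1 hP.2.1
  · rintro ⟨d, G⟩ ⟨hG, hEM⟩
    obtain ⟨hrow, hcol, hsd, hred, hfirst, heven⟩ := (ofGrid_mem_EMset_iff hG).1 hEM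
    obtain ⟨m, rfl⟩ : ∃ m, d = 2 * m := ⟨d / 2, (Nat.two_mul_div_two_of_even heven).symm⟩
    simp only [Nat.mul_div_cancel_left m two_pos]
    exact foldGrid_mem hG hrow hcol hsd hred hfirst

end Fishburn

end

theorem stmt12_general (n k : ℕ) :
    (EMset n k).ncard = (RMset₂ n k).ncard := by
  rw [Fishburn.ncard_EMset, Fishburn.ncard_foldedSet, ← Fishburn.ncard_eq_ncard_gridsOf _
    fun A hA => hA.1, Fishburn.ncard_CMset₂]

/-- `|EM(n,k)| = |RM(n,k)|` for all `n ≥ 1`, `k ≥ 0`. -/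
theorem stmt12 (n k : ℕ) (hn : 1 ≤ n) :
    (EMset n k).ncard = (RMset₂ n k).ncard :=
  stmt12_general n k
end
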